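/- arXiv:cs/0504110 — 2 statements merged into one kernel-verified Lean document; each statement's English description precedes it below -/
import Mathlib

section
/- Let M, N ≥ 2, let A be a Hermitian (MN)×(MN) complex matrix, let λ₀ ≤ λ₁ ≤ … ≤ λ_{MN−1} be its eigenvalues listed in nondecreasing order, and let (v₀, …, v_{MN−1}) be a corresponding orthonormal basis of eigenvectors, A v_i = λ_i v_i. Then A is a left or a right entanglement witness if and only if (i) there exists k ∈ {0, 1, …, MN−2} such that the linear span of {v₀, …, v_k} contains no nonzero vector of the form x ⊗ y (x ∈ ℂ^M, y ∈ ℂ^N) and λ_{k+1} > λ_k, or (ii) there exists l ∈ {1, 2, …, MN−1} such that the linear span of {v_l, v_{l+1}, …, v_{MN−1}} contains no nonzero vector of the form x ⊗ y and λ_l > λ_{l−1}. -/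
open Matrix
open scoped Kronecker ComplexOrder

noncomputable section

/-- `x` is a unit vector in `ℂ^d`. -/
def isUnitVec {d : ℕ} (x : Fin d → ℂ) : Prop := ∑ i, ‖x i‖ ^ 2 = 1

/-- The rank-one projector `x xᴴ`. -/
def outer {d : ℕ} (x : Fin d → ℂ) : Matrix (Fin d) (Fin d) ℂ :=
  Matrix.vecMulVec x (star x)

/-- The set of pure product states `(x xᴴ) ⊗ (y yᴴ)` for unit vectors `x, y`. -/
def pureProduct (M N : ℕ) : Set (Matrix (Fin M × Fin N) (Fin M × Fin N) ℂ) :=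
  {σ | ∃ x : Fin M → ℂ, ∃ y : Fin N → ℂ,
    isUnitVec x ∧ isUnitVec y ∧ σ = outer x ⊗ₖ outer y}

/-- The set of separable states: the convex hull (over ℝ) of the pure product states. -/
def SepStates (M N : ℕ) : Set (Matrix (Fin M × Fin N) (Fin M × Fin N) ℂ) :=
  convexHull ℝ (pureProduct M N)

/-- `ρ` is a density matrix: positive semidefinite with unit trace. -/
def IsDensity {d : Type*} [Fintype d] (ρ : Matrix d d ℂ) : Prop :=
  ρ.PosSemidef ∧ ρ.trace = 1

/-- `A` is a left entanglement witness: for some `a ∈ ℝ`, `tr(Aσ) ≥ a` for all separable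
`σ`, while `tr(Aρ) < a` for some density matrix `ρ`. -/
def IsLeftEW (M N : ℕ) (A : Matrix (Fin M × Fin N) (Fin M × Fin N) ℂ) : Prop :=
  ∃ a : ℝ, (∀ σ ∈ SepStates M N, a ≤ ((A * σ).trace).re) ∧
    ∃ ρ : Matrix (Fin M × Fin N) (Fin M × Fin N) ℂ, IsDensity ρ ∧ ((A * ρ).trace).re < a

/-- `A` is a right entanglement witness: for some `b ∈ ℝ`, `tr(Aσ) ≤ b` for all separable
`σ`, while `tr(Aρ) > b` for some density matrix `ρ`. -/
def IsRightEW (M N : ℕ) (A : Matrix (Fin M × Fin N) (Fin M × Fin N) ℂ) : Prop :=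
  ∃ b : ℝ, (∀ σ ∈ SepStates M N, ((A * σ).trace).re ≤ b) ∧
    ∃ ρ : Matrix (Fin M × Fin N) (Fin M × Fin N) ℂ, IsDensity ρ ∧ b < ((A * ρ).trace).re

/-- `z ∈ ℂ^M ⊗ ℂ^N` is a product vector `x ⊗ y`. -/
def IsProdVec (M N : ℕ) (z : Fin M × Fin N → ℂ) : Prop :=
  ∃ x : Fin M → ℂ, ∃ y : Fin N → ℂ, z = fun ij => x ij.1 * y ij.2

/-! In the eigenbasis, `tr(Aρ) = ∑ᵢ λᵢ wᵢ(ρ)`, where the weights `wᵢ(ρ) = vᵢᴴ ρ vᵢ` of a density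
matrix form a probability vector and `wᵢ(z zᴴ) = |vᵢᴴ z|²`. Over all states `tr(Aρ)` therefore
has infimum `λ₀`, attained at `v₀ v₀ᴴ`, while over separable states it is, by convexity and
compactness, a minimum over the pure product states. So `A` is a left witness iff every unit
product vector puts weight on an eigenvalue above `λ₀`. For `k` the last index with `λₖ = λ₀`
this says that `span {v₀, …, vₖ}` contains no product vector; conversely, for any gap
`λₖ < λₖ₊₁` with that property, a product vector must put weight on some `λⱼ ≥ λₖ₊₁ > λ₀`.
Right witnesses of `A` are the left witnesses of `-A`. -/

section Weights

variable {ι : Type*} [Fintype ι] {lam w : ι → ℝ} {t : ℝ}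

theorem le_sum_mul_of_mem_stdSimplex (hw : w ∈ stdSimplex ℝ ι) (h : ∀ j, 0 < w j → t ≤ lam j) :
    t ≤ ∑ j, lam j * w j := by
  calc t = ∑ j, t * w j := by rw [← Finset.mul_sum, hw.2, mul_one]
    _ ≤ ∑ j, lam j * w j := Finset.sum_le_sum fun j _ => by
      rcases (hw.1 j).eq_or_lt with h0 | hpos
      · simp [← h0]
      · exact mul_le_mul_of_nonneg_right (h j hpos) hpos.le

theorem sum_mul_le_of_mem_stdSimplex (hw : w ∈ stdSimplex ℝ ι) (h : ∀ j, 0 < w j → lam j ≤ t) :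
    ∑ j, lam j * w j ≤ t := by
  simpa using le_sum_mul_of_mem_stdSimplex (lam := -lam) (t := -t) hw fun j hj => neg_le_neg (h j hj)

theorem lt_sum_mul_of_mem_stdSimplex (hw : w ∈ stdSimplex ℝ ι) (h : ∀ j, t ≤ lam j) {j : ι}
    (hj : 0 < w j) (hlt : t < lam j) : t < ∑ j, lam j * w j := by
  calc t = ∑ j, t * w j := by rw [← Finset.mul_sum, hw.2, mul_one]
    _ < ∑ j, lam j * w j :=
      Finset.sum_lt_sum (fun i _ => mul_le_mul_of_nonneg_right (h i) (hw.1 i))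
        ⟨j, Finset.mem_univ _, mul_lt_mul_of_pos_right hlt hj⟩

end Weights

section SpectralGap

variable {ι : Type*} [Fintype ι] [LinearOrder ι] {lam : ι → ℝ} {W : Set (ι → ℝ)}

theorem exists_forall_lt_sum_mul_iff_exists_covBy (hmono : Monotone lam)
    (hW : W ⊆ stdSimplex ℝ ι) (hWne : W.Nonempty) :
    (∃ i, ∀ w ∈ W, lam i < ∑ j, lam j * w j) ↔
      ∃ a b, a ⋖ b ∧ (∀ w ∈ W, ∃ j, a < j ∧ 0 < w j) ∧ lam a < lam b := by
  constructor
  · rintro ⟨i, hi⟩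
    set a := (Finset.univ.filter fun j => lam j ≤ lam i).max' ⟨i, by simp⟩
    have hle_iff : ∀ j, lam j ≤ lam i ↔ j ≤ a := fun j =>
      ⟨fun h => Finset.le_max' _ j (by simpa using h), fun h => (hmono h).trans
        (by simpa using Finset.max'_mem (Finset.univ.filter fun j => lam j ≤ lam i) ⟨i, by simp⟩)⟩
    have hsupp : ∀ w ∈ W, ∃ j, a < j ∧ 0 < w j := by
      intro w hw
      by_contra! h
      exact (hi w hw).not_ge <| sum_mul_le_of_mem_stdSimplex (hW hw) fun j hj =>
        (hle_iff j).2 (not_lt.1 fun haj => (h j haj).not_gt hj)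
    obtain ⟨w, hw⟩ := hWne
    obtain ⟨j, haj, -⟩ := hsupp w hw
    obtain ⟨b, hab, -⟩ := exists_covBy_le_of_lt haj
    have hb : lam i < lam b := not_le.1 fun h => hab.lt.not_ge ((hle_iff b).1 h)
    exact ⟨a, b, hab, hsupp, ((hle_iff a).2 le_rfl).trans_lt hb⟩
  · rintro ⟨a, b, hab, hsupp, hgap⟩
    have : Nonempty ι := ⟨a⟩
    obtain ⟨i, hi⟩ := Finite.exists_min lam
    refine ⟨i, fun w hw => ?_⟩
    obtain ⟨j, haj, hj⟩ := hsupp w hw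
    exact lt_sum_mul_of_mem_stdSimplex (hW hw) hi hj
      ((hi a).trans_lt (hgap.trans_le (hmono (hab.ge_of_gt haj))))

theorem exists_forall_sum_mul_lt_iff_exists_covBy (hmono : Monotone lam)
    (hW : W ⊆ stdSimplex ℝ ι) (hWne : W.Nonempty) :
    (∃ i, ∀ w ∈ W, ∑ j, lam j * w j < lam i) ↔
      ∃ a b, a ⋖ b ∧ (∀ w ∈ W, ∃ j, j < b ∧ 0 < w j) ∧ lam a < lam b := by
  have := exists_forall_lt_sum_mul_iff_exists_covBy (ι := ιᵒᵈ)
    (lam := fun i => -lam (OrderDual.ofDual i)) (fun i j h => neg_le_neg (hmono h)) hW hWne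
  simp only [Finset.sum_neg_distrib, neg_mul, neg_lt_neg_iff] at this
  exact this.trans ⟨fun ⟨a, b, hab, h, hgap⟩ => ⟨b, a, hab.ofDual, h, hgap⟩,
    fun ⟨a, b, hab, h, hgap⟩ => ⟨OrderDual.toDual b, OrderDual.toDual a, hab.toDual, h, hgap⟩⟩

end SpectralGap

theorem Matrix.trace_vecMulVec_mul {n R : Type*} [Fintype n] [CommSemiring R] (a b : n → R)
    (ρ : Matrix n n R) : (vecMulVec a b * ρ).trace = b ⬝ᵥ ρ *ᵥ a := by
  rw [vecMulVec_mul, trace_vecMulVec, dotProduct_comm, dotProduct_mulVec]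

theorem re_star_dotProduct_vecMulVec_mulVec {n : Type*} [Fintype n] (u z : n → ℂ) :
    (star u ⬝ᵥ vecMulVec z (star z) *ᵥ u).re = ‖star u ⬝ᵥ z‖ ^ 2 := by
  rw [vecMulVec_mulVec, dotProduct_smul, op_smul_eq_mul, star_dotProduct z u, RCLike.star_def,
    Complex.mul_conj']
  exact_mod_cast Complex.ofReal_re _

theorem isDensity_vecMulVec_star {n : Type*} [Fintype n] {v : n → ℂ} (hv : star v ⬝ᵥ v = 1) :
    IsDensity (vecMulVec v (star v)) :=
  ⟨posSemidef_vecMulVec_self_star _, by rwa [trace_vecMulVec, dotProduct_comm]⟩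

section OrthonormalEigenbasis

variable {n ι : Type*} [Fintype n] [DecidableEq n] [Fintype ι] [DecidableEq ι]
  {v : ι → n → ℂ} {A : Matrix n n ℂ} {lam : ι → ℝ}
  (horth : ∀ i j, star (v i) ⬝ᵥ v j = if i = j then 1 else 0)
  (hcard : Fintype.card ι = Fintype.card n)
include horth hcard

theorem sum_vecMulVec_star_eq_one : ∑ i, vecMulVec (v i) (star (v i)) = 1 := by
  set U : Matrix n ι ℂ := of fun p i => v i p
  have hU : Uᴴ * U = 1 := by
    ext i j
    simpa [U, mul_apply, dotProduct, one_apply] using horth i j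
  rw [mul_eq_one_comm_of_equiv (Fintype.equivOfCardEq hcard)] at hU
  rw [← hU]
  ext p q
  simp [U, mul_apply, Matrix.sum_apply, vecMulVec_apply]

theorem eq_sum_dotProduct_smul (z : n → ℂ) : z = ∑ i, (star (v i) ⬝ᵥ z) • v i := by
  conv_lhs => rw [← one_mulVec z, ← sum_vecMulVec_star_eq_one horth hcard]
  simp [Matrix.sum_mulVec, vecMulVec_mulVec]

theorem mem_span_image_iff {s : Set ι} {z : n → ℂ} :
    z ∈ Submodule.span ℂ (v '' s) ↔ ∀ j ∉ s, star (v j) ⬝ᵥ z = 0 := by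
  constructor
  · intro hz j hj
    induction hz using Submodule.span_induction with
    | mem w hw =>
      obtain ⟨i, hi, rfl⟩ := hw
      rw [horth, if_neg (ne_of_mem_of_not_mem hi hj).symm]
    | zero => simp
    | add w₁ w₂ _ _ h₁ h₂ => rw [dotProduct_add, h₁, h₂, add_zero]
    | smul c w _ h => rw [dotProduct_smul, h, smul_zero]
  · intro h
    rw [eq_sum_dotProduct_smul horth hcard z]
    refine Submodule.sum_mem _ fun i _ => ?_
    by_cases hi : i ∈ s
    · exact Submodule.smul_mem _ _ (Submodule.subset_span ⟨i, hi, rfl⟩)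
    · simp [h i hi]

theorem trace_mul_eq_sum (heig : ∀ i, A *ᵥ v i = (lam i : ℂ) • v i) (ρ : Matrix n n ℂ) :
    (A * ρ).trace = ∑ i, (lam i : ℂ) * (star (v i) ⬝ᵥ ρ *ᵥ v i) := by
  conv_lhs => rw [← Matrix.mul_one A, ← sum_vecMulVec_star_eq_one horth hcard]
  simp [Finset.mul_sum, Finset.sum_mul, mul_vecMulVec, heig, trace_sum, trace_vecMulVec_mul]

theorem re_trace_mul_eq_sum (heig : ∀ i, A *ᵥ v i = (lam i : ℂ) • v i) (ρ : Matrix n n ℂ) :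
    ((A * ρ).trace).re = ∑ i, lam i * (star (v i) ⬝ᵥ ρ *ᵥ v i).re := by
  simp [trace_mul_eq_sum horth hcard heig, Complex.re_sum]

theorem IsDensity.re_star_dotProduct_mulVec_mem_stdSimplex {ρ : Matrix n n ℂ}
    (hρ : IsDensity ρ) : (fun i => (star (v i) ⬝ᵥ ρ *ᵥ v i).re) ∈ stdSimplex ℝ ι := by
  refine ⟨fun i => (Complex.le_def.mp (hρ.1.dotProduct_mulVec_nonneg (v i))).1, ?_⟩
  simpa [hρ.2] using (re_trace_mul_eq_sum horth hcard (A := 1) (lam := 1) (by simp) ρ).symm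

end OrthonormalEigenbasis

section ProductStates

variable {M N : ℕ}

theorem outer_kronecker_outer (x : Fin M → ℂ) (y : Fin N → ℂ) :
    outer x ⊗ₖ outer y =
      vecMulVec (fun ij => x ij.1 * y ij.2) (star fun ij => x ij.1 * y ij.2) := by
  ext ⟨i, j⟩ ⟨k, l⟩
  simp only [outer, kroneckerMap_apply, vecMulVec_apply, Pi.star_apply, star_mul']
  ring

theorem isUnitVec_iff_norm_toLp {d : ℕ} (x : Fin d → ℂ) :
    isUnitVec x ↔ ‖WithLp.toLp 2 x‖ = 1 := by
  rw [EuclideanSpace.norm_eq, Real.sqrt_eq_one, isUnitVec]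

theorem isUnitVec.ne_zero {d : ℕ} {x : Fin d → ℂ} (hx : isUnitVec x) : x ≠ 0 := by
  rintro rfl
  simp [isUnitVec] at hx

theorem exists_isUnitVec_smul {d : ℕ} {x : Fin d → ℂ} (hx : x ≠ 0) :
    ∃ c : ℂ, c ≠ 0 ∧ isUnitVec (c • x) := by
  have hx' : WithLp.toLp 2 x ≠ 0 := by simpa using hx
  refine ⟨(‖WithLp.toLp 2 x‖⁻¹ : ℂ), by simpa using hx', ?_⟩
  rw [isUnitVec_iff_norm_toLp, WithLp.toLp_smul]
  exact norm_smul_inv_norm hx'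

theorem isUnitVec_single {d : ℕ} (i : Fin d) : isUnitVec (Pi.single i (1 : ℂ)) := by
  simp [isUnitVec, Pi.single_apply, apply_ite]

theorem dotProduct_star_self_of_isUnitVec {d : ℕ} {x : Fin d → ℂ} (hx : isUnitVec x) :
    x ⬝ᵥ star x = 1 := by
  simp only [dotProduct, Pi.star_apply, RCLike.star_def, Complex.mul_conj']
  exact_mod_cast hx

theorem pureProduct_eq_image :
    pureProduct M N = (fun p : EuclideanSpace ℂ (Fin M) × EuclideanSpace ℂ (Fin N) =>
      outer p.1.ofLp ⊗ₖ outer p.2.ofLp) '' (Metric.sphere 0 1 ×ˢ Metric.sphere 0 1) := by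
  ext σ
  simp only [pureProduct, isUnitVec_iff_norm_toLp, Set.mem_image, Set.mem_prod,
    mem_sphere_iff_norm, sub_zero, Prod.exists]
  constructor
  · rintro ⟨x, y, hx, hy, rfl⟩
    exact ⟨WithLp.toLp 2 x, WithLp.toLp 2 y, ⟨hx, hy⟩, rfl⟩
  · rintro ⟨x, y, ⟨hx, hy⟩, rfl⟩
    exact ⟨x.ofLp, y.ofLp, hx, hy, rfl⟩

theorem isCompact_pureProduct : IsCompact (pureProduct M N) := by
  rw [pureProduct_eq_image]
  refine (isCompact_sphere _ _ |>.prod (isCompact_sphere _ _)).image ?_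
  simp_rw [outer_kronecker_outer]
  fun_prop

theorem pureProduct_nonempty (hM : 0 < M) (hN : 0 < N) : (pureProduct M N).Nonempty :=
  ⟨_, _, _, isUnitVec_single ⟨0, hM⟩, isUnitVec_single ⟨0, hN⟩, rfl⟩

theorem isDensity_of_mem_pureProduct {σ : Matrix (Fin M × Fin N) (Fin M × Fin N) ℂ}
    (hσ : σ ∈ pureProduct M N) : IsDensity σ := by
  obtain ⟨x, y, hx, hy, rfl⟩ := hσ
  refine ⟨outer_kronecker_outer x y ▸ posSemidef_vecMulVec_self_star _, ?_⟩
  rw [trace_kronecker, outer, outer, trace_vecMulVec, trace_vecMulVec,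
    dotProduct_star_self_of_isUnitVec hx, dotProduct_star_self_of_isUnitVec hy, mul_one]

theorem forall_isProdVec_eq_zero_iff (S : Submodule ℂ (Fin M × Fin N → ℂ)) :
    (∀ z ∈ S, IsProdVec M N z → z = 0) ↔
      ∀ x y, isUnitVec x → isUnitVec y → (fun ij : Fin M × Fin N => x ij.1 * y ij.2) ∉ S := by
  constructor
  · intro h x y hx hy hS
    obtain ⟨i, hi⟩ := Function.ne_iff.mp hx.ne_zero
    obtain ⟨j, hj⟩ := Function.ne_iff.mp hy.ne_zero
    exact mul_ne_zero hi hj (congrFun (h _ hS ⟨x, y, rfl⟩) (i, j))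
  · rintro h z hS ⟨x, y, rfl⟩
    by_contra hz
    obtain ⟨c, hc, hcx⟩ := exists_isUnitVec_smul (x := x) (by rintro rfl; exact hz (by ext; simp))
    obtain ⟨d, hd, hdy⟩ := exists_isUnitVec_smul (x := y) (by rintro rfl; exact hz (by ext; simp))
    refine h _ _ hcx hdy ?_
    convert S.smul_mem (c * d) hS using 1
    ext ij
    simp only [Pi.smul_apply, smul_eq_mul]
    ring

theorem forall_mem_sepStates_le_iff (A : Matrix (Fin M × Fin N) (Fin M × Fin N) ℂ) (a : ℝ) :
    (∀ σ ∈ SepStates M N, a ≤ ((A * σ).trace).re) ↔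
      ∀ σ ∈ pureProduct M N, a ≤ ((A * σ).trace).re := by
  refine ⟨fun h σ hσ => h σ (subset_convexHull ℝ _ hσ), fun h => convexHull_min h ?_⟩
  refine convex_halfSpace_ge ⟨fun σ τ => ?_, fun c σ => ?_⟩ a
  · simp [Matrix.mul_add]
  · simp

theorem isRightEW_iff_isLeftEW_neg (A : Matrix (Fin M × Fin N) (Fin M × Fin N) ℂ) :
    IsRightEW M N A ↔ IsLeftEW M N (-A) := by
  simp only [IsRightEW, IsLeftEW, Matrix.neg_mul, trace_neg, Complex.neg_re]
  constructor <;> rintro ⟨b, hsep, ρ, hρ, hlt⟩ <;>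
    exact ⟨-b, fun σ hσ => by linarith [hsep σ hσ], ρ, hρ, by linarith⟩

end ProductStates

section EntanglementWitness

variable {M N : ℕ} {ι : Type*} [Fintype ι] [DecidableEq ι] {v : ι → Fin M × Fin N → ℂ}
  {A : Matrix (Fin M × Fin N) (Fin M × Fin N) ℂ} {lam : ι → ℝ}
  (horth : ∀ i j, star (v i) ⬝ᵥ v j = if i = j then 1 else 0)
  (hcard : Fintype.card ι = Fintype.card (Fin M × Fin N))
include horth hcard

theorem exists_isDensity_lt_iff (heig : ∀ i, A *ᵥ v i = (lam i : ℂ) • v i) (a : ℝ) :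
    (∃ ρ, IsDensity ρ ∧ ((A * ρ).trace).re < a) ↔ ∃ i, lam i < a := by
  constructor
  · rintro ⟨ρ, hρ, hlt⟩
    by_contra! h
    refine hlt.not_ge ?_
    rw [re_trace_mul_eq_sum horth hcard heig]
    exact le_sum_mul_of_mem_stdSimplex
      (hρ.re_star_dotProduct_mulVec_mem_stdSimplex horth hcard) fun j _ => h j
  · rintro ⟨i, hi⟩
    refine ⟨_, isDensity_vecMulVec_star (v := v i) (by simpa using horth i i), ?_⟩
    rwa [mul_vecMulVec, heig, trace_vecMulVec, smul_dotProduct, dotProduct_comm, horth,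
      if_pos rfl, smul_eq_mul, mul_one, Complex.ofReal_re]

theorem isLeftEW_iff_exists_forall_lt (heig : ∀ i, A *ᵥ v i = (lam i : ℂ) • v i) :
    IsLeftEW M N A ↔ ∃ i, ∀ σ ∈ pureProduct M N, lam i < ((A * σ).trace).re := by
  simp only [IsLeftEW, forall_mem_sepStates_le_iff, exists_isDensity_lt_iff horth hcard heig]
  constructor
  · rintro ⟨a, ha, i, hi⟩
    exact ⟨i, fun σ hσ => hi.trans_le (ha σ hσ)⟩
  · rintro ⟨i, hi⟩
    obtain ⟨a, hia, ha⟩ := isCompact_pureProduct.exists_forall_le' (by fun_prop) hi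
    exact ⟨a, ha, i, hia⟩

theorem isRightEW_iff_exists_forall_lt (heig : ∀ i, A *ᵥ v i = (lam i : ℂ) • v i) :
    IsRightEW M N A ↔ ∃ i, ∀ σ ∈ pureProduct M N, ((A * σ).trace).re < lam i := by
  rw [isRightEW_iff_isLeftEW_neg,
    isLeftEW_iff_exists_forall_lt horth hcard (lam := -lam) fun i => by simp [neg_mulVec, heig]]
  simp

theorem forall_mem_pureProduct_exists_pos_iff (s : Set ι) :
    (∀ σ ∈ pureProduct M N, ∃ j, j ∉ s ∧ 0 < (star (v j) ⬝ᵥ σ *ᵥ v j).re) ↔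
      ∀ z ∈ Submodule.span ℂ (v '' s), IsProdVec M N z → z = 0 := by
  rw [forall_isProdVec_eq_zero_iff]
  refine ⟨fun h x y hx hy hz => ?_, ?_⟩
  · obtain ⟨j, hj, hpos⟩ := h _ ⟨x, y, hx, hy, rfl⟩
    rw [outer_kronecker_outer, re_star_dotProduct_vecMulVec_mulVec,
      (mem_span_image_iff horth hcard).1 hz j hj] at hpos
    simp at hpos
  · rintro h σ ⟨x, y, hx, hy, rfl⟩
    obtain ⟨j, hj, hne⟩ : ∃ j, j ∉ s ∧ star (v j) ⬝ᵥ (fun ij => x ij.1 * y ij.2) ≠ 0 := by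
      simpa [mem_span_image_iff horth hcard] using h x y hx hy
    refine ⟨j, hj, ?_⟩
    rw [outer_kronecker_outer, re_star_dotProduct_vecMulVec_mulVec]
    exact pow_pos (norm_pos_iff.2 hne) 2

variable [LinearOrder ι]

theorem isLeftEW_iff_exists_covBy (hM : 0 < M) (hN : 0 < N)
    (heig : ∀ i, A *ᵥ v i = (lam i : ℂ) • v i) (hmono : Monotone lam) :
    IsLeftEW M N A ↔ ∃ a b, a ⋖ b ∧
      (∀ z ∈ Submodule.span ℂ (v '' {i | i ≤ a}), IsProdVec M N z → z = 0) ∧ lam a < lam b := by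
  have key := exists_forall_lt_sum_mul_iff_exists_covBy hmono
    (W := (fun σ j => (star (v j) ⬝ᵥ σ *ᵥ v j).re) '' pureProduct M N)
    (Set.image_subset_iff.2 fun _ hσ =>
      (isDensity_of_mem_pureProduct hσ).re_star_dotProduct_mulVec_mem_stdSimplex horth hcard)
    ((pureProduct_nonempty hM hN).image _)
  simp only [Set.forall_mem_image, ← re_trace_mul_eq_sum horth hcard heig] at key
  simp only [isLeftEW_iff_exists_forall_lt horth hcard heig, key,
    ← forall_mem_pureProduct_exists_pos_iff horth hcard, Set.mem_ofPred_eq, not_le]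

theorem isRightEW_iff_exists_covBy (hM : 0 < M) (hN : 0 < N)
    (heig : ∀ i, A *ᵥ v i = (lam i : ℂ) • v i) (hmono : Monotone lam) :
    IsRightEW M N A ↔ ∃ a b, a ⋖ b ∧
      (∀ z ∈ Submodule.span ℂ (v '' {i | b ≤ i}), IsProdVec M N z → z = 0) ∧ lam a < lam b := by
  have key := exists_forall_sum_mul_lt_iff_exists_covBy hmono
    (W := (fun σ j => (star (v j) ⬝ᵥ σ *ᵥ v j).re) '' pureProduct M N)
    (Set.image_subset_iff.2 fun _ hσ =>
      (isDensity_of_mem_pureProduct hσ).re_star_dotProduct_mulVec_mem_stdSimplex horth hcard)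
    ((pureProduct_nonempty hM hN).image _)
  simp only [Set.forall_mem_image, ← re_trace_mul_eq_sum horth hcard heig] at key
  simp only [isRightEW_iff_exists_forall_lt horth hcard heig, key,
    ← forall_mem_pureProduct_exists_pos_iff horth hcard, Set.mem_ofPred_eq, not_le]

end EntanglementWitness

theorem Fin.exists_covBy_iff_exists_succ {n : ℕ} {P : Fin n → Fin n → Prop} :
    (∃ a b : Fin n, a ⋖ b ∧ P a b) ↔ ∃ k : ℕ, ∃ hk : k + 1 < n, P ⟨k, by omega⟩ ⟨k + 1, hk⟩ := by
  constructor
  · rintro ⟨a, b, hab, h⟩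
    have hb : a + 1 = (b : ℕ) := Nat.covBy_iff_add_one_eq.1 (Fin.covBy_iff.1 hab)
    have hb' : (⟨a + 1, hb ▸ b.isLt⟩ : Fin n) = b := Fin.ext hb
    exact ⟨a, _, hb' ▸ h⟩
  · rintro ⟨k, hk, h⟩
    exact ⟨_, _, Fin.covBy_iff.2 (Nat.covBy_iff_add_one_eq.2 rfl), h⟩

theorem Fin.exists_covBy_iff_exists_pred {n : ℕ} {P : Fin n → Fin n → Prop} :
    (∃ a b : Fin n, a ⋖ b ∧ P a b) ↔
      ∃ l : ℕ, ∃ _ : 1 ≤ l, ∃ hl : l < n, P ⟨l - 1, by omega⟩ ⟨l, hl⟩ := by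
  rw [Fin.exists_covBy_iff_exists_succ]
  constructor
  · rintro ⟨k, hk, h⟩
    exact ⟨k + 1, by omega, hk, h⟩
  · rintro ⟨l, hl1, hl, h⟩
    obtain ⟨k, rfl⟩ := Nat.exists_eq_add_of_le' hl1
    exact ⟨k, hl, h⟩

/-- Spectral characterisation of entanglement witnesses: `A` is a left or right
entanglement witness iff (i) for some `k ≤ MN - 2`, the span of the eigenvectors of the
`k+1` smallest eigenvalues contains no nonzero product vector and `λ_{k+1} > λ_k`, or
(ii) for some `1 ≤ l ≤ MN - 1`, the span of the eigenvectors of the `MN - l` largest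
eigenvalues contains no nonzero product vector and `λ_l > λ_{l-1}`. -/
theorem isLeftOrRightEW_iff_spectral (M N : ℕ) (hM : 2 ≤ M) (hN : 2 ≤ N)
    (A : Matrix (Fin M × Fin N) (Fin M × Fin N) ℂ)
    (lam : Fin (M * N) → ℝ) (hmono : Monotone lam)
    (v : Fin (M * N) → (Fin M × Fin N → ℂ))
    (horth : ∀ i j, star (v i) ⬝ᵥ v j = if i = j then 1 else 0)
    (heig : ∀ i, A.mulVec (v i) = (lam i : ℂ) • v i) :
    (IsLeftEW M N A ∨ IsRightEW M N A) ↔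
      ((∃ k : ℕ, ∃ hk : k + 1 < M * N,
          (∀ z ∈ Submodule.span ℂ (v '' {i : Fin (M * N) | (i : ℕ) ≤ k}),
              IsProdVec M N z → z = 0) ∧
          lam ⟨k, by omega⟩ < lam ⟨k + 1, hk⟩) ∨
       (∃ l : ℕ, ∃ hl1 : 1 ≤ l, ∃ hl : l < M * N,
          (∀ z ∈ Submodule.span ℂ (v '' {i : Fin (M * N) | l ≤ (i : ℕ)}),
              IsProdVec M N z → z = 0) ∧
          lam ⟨l - 1, by omega⟩ < lam ⟨l, hl⟩)) := by
  have hcard : Fintype.card (Fin (M * N)) = Fintype.card (Fin M × Fin N) := by simp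
  rw [isLeftEW_iff_exists_covBy horth hcard (by omega) (by omega) heig hmono,
    isRightEW_iff_exists_covBy horth hcard (by omega) (by omega) heig hmono,
    Fin.exists_covBy_iff_exists_succ, Fin.exists_covBy_iff_exists_pred]
  -- `i ≤ ⟨k, _⟩` in `Fin` unfolds to `(i : ℕ) ≤ k`
  rfl
end
end

section
/- Let A := ψ⁺(ψ⁺)ᴴ − ψ⁻(ψ⁻)ᴴ, a Hermitian 4×4 matrix. Then the minimum of ⟨x⊗y, A(x⊗y)⟩ over all unit vectors x, y ∈ ℂ² equals −1/2 and the maximum equals +1/2; i.e., a*(A_ψ) = −1/2 and b*(A_ψ) = +1/2, so A is an ambidextrous entanglement witness. -/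
/-!
The diagonal parts of the two Bell projectors cancel, so `A_ψ = |00⟩⟨11| + |11⟩⟨00|` and
`⟨x⊗y, A_ψ (x⊗y)⟩ = 2 Re(conj(x₀y₀) x₁y₁)`. Its absolute value is at most
`2 (|x₀||x₁|) (|y₀||y₁|) ≤ 2 · ½ · ½` by AM–GM on each unit vector, and the values `±½` are
attained at the real vectors `(1, ±1)/√2 ⊗ (1, 1)/√2`.
-/

open Matrix

noncomputable section

/-- The product vector `x ⊗ y` in `ℂ² ⊗ ℂ²`. -/
def prodVec (x y : Fin 2 → ℂ) : Fin 2 × Fin 2 → ℂ := fun ij => x ij.1 * y ij.2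

/-- The Bell state `ψ⁺ = (e₀⊗e₀ + e₁⊗e₁)/√2`. -/
def bellPsiP : Fin 2 × Fin 2 → ℂ := fun ij =>
  if ij.1 = ij.2 then (((Real.sqrt 2)⁻¹ : ℝ) : ℂ) else 0

/-- The Bell state `ψ⁻ = (e₀⊗e₀ − e₁⊗e₁)/√2`. -/
def bellPsiM : Fin 2 × Fin 2 → ℂ := fun ij =>
  if ij = (0, 0) then (((Real.sqrt 2)⁻¹ : ℝ) : ℂ)
  else if ij = (1, 1) then -(((Real.sqrt 2)⁻¹ : ℝ) : ℂ)
  else 0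

/-- The observable `A_ψ = ψ⁺(ψ⁺)ᴴ − ψ⁻(ψ⁻)ᴴ`. -/
def bellA : Matrix (Fin 2 × Fin 2) (Fin 2 × Fin 2) ℂ :=
  Matrix.vecMulVec bellPsiP (star bellPsiP) - Matrix.vecMulVec bellPsiM (star bellPsiM)

lemma isUnitVec_two_iff (x : Fin 2 → ℂ) : isUnitVec x ↔ ‖x 0‖ ^ 2 + ‖x 1‖ ^ 2 = 1 := by
  rw [isUnitVec, Fin.sum_univ_two]

lemma norm_mul_norm_le_half_of_isUnitVec {x : Fin 2 → ℂ} (hx : isUnitVec x) :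
    ‖x 0‖ * ‖x 1‖ ≤ 1 / 2 := by
  rw [isUnitVec_two_iff] at hx
  nlinarith [two_mul_le_add_sq ‖x 0‖ ‖x 1‖]

lemma isUnitVec_ofReal {a b : ℝ} (h : a ^ 2 + b ^ 2 = 1) : isUnitVec ![(a : ℂ), b] := by
  simpa [isUnitVec_two_iff, Complex.norm_real, sq_abs] using h

lemma bellA_eq_single_add_single :
    bellA = single (0, 0) (1, 1) 1 + single (1, 1) (0, 0) 1 := by
  have hc : ((√2 : ℝ) : ℂ)⁻¹ * ((√2 : ℝ) : ℂ)⁻¹ + ((√2 : ℝ) : ℂ)⁻¹ * ((√2 : ℝ) : ℂ)⁻¹ = 1 := by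
    rw [← mul_inv, ← Complex.ofReal_mul, Real.mul_self_sqrt zero_le_two]; norm_num
  ext ⟨i, j⟩ ⟨k, l⟩
  fin_cases i <;> fin_cases j <;> fin_cases k <;> fin_cases l <;>
    simp [bellA, bellPsiP, bellPsiM, vecMulVec, single, hc]

lemma bellA_expectation (x y : Fin 2 → ℂ) :
    star (prodVec x y) ⬝ᵥ bellA *ᵥ prodVec x y =
      (2 * (starRingEnd ℂ (x 0 * y 0) * (x 1 * y 1)).re : ℝ) := by
  rw [← Complex.add_conj]
  simp [bellA_eq_single_add_single, add_mulVec, single_mulVec, dotProduct, Fintype.sum_prod_type,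
    Function.update_apply, prodVec, mul_comm]

lemma abs_re_bellA_expectation_le {x y : Fin 2 → ℂ} (hx : isUnitVec x) (hy : isUnitVec y) :
    |(star (prodVec x y) ⬝ᵥ bellA *ᵥ prodVec x y).re| ≤ 1 / 2 := by
  have hx' := norm_mul_norm_le_half_of_isUnitVec hx
  have hy' := norm_mul_norm_le_half_of_isUnitVec hy
  calc |(star (prodVec x y) ⬝ᵥ bellA *ᵥ prodVec x y).re|
      = 2 * |(starRingEnd ℂ (x 0 * y 0) * (x 1 * y 1)).re| := by
        rw [bellA_expectation, Complex.ofReal_re, abs_mul, abs_two]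
    _ ≤ 2 * ‖starRingEnd ℂ (x 0 * y 0) * (x 1 * y 1)‖ := by
        gcongr; exact Complex.abs_re_le_norm _
    _ = 2 * ((‖x 0‖ * ‖x 1‖) * (‖y 0‖ * ‖y 1‖)) := by
        simp only [norm_mul, Complex.norm_conj]; ring
    _ ≤ 2 * ((1 / 2) * (1 / 2)) := by gcongr
    _ = 1 / 2 := by norm_num

lemma re_bellA_expectation_ofReal (a b c d : ℝ) :
    (star (prodVec ![(a : ℂ), b] ![(c : ℂ), d]) ⬝ᵥ bellA *ᵥ prodVec ![(a : ℂ), b] ![(c : ℂ), d]).re =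
      2 * (a * c * (b * d)) := by
  simp [bellA_expectation, ← Complex.ofReal_mul, Complex.conj_ofReal]

/-- The minimum of `⟨x⊗y, A_ψ (x⊗y)⟩` over unit vectors `x, y ∈ ℂ²` is `−1/2` and the
maximum is `+1/2`: `a*(A_ψ) = −1/2` and `b*(A_ψ) = 1/2`, so `A_ψ` is an ambidextrous
entanglement witness. -/
theorem bellA_min_max :
    IsLeast {r : ℝ | ∃ x y : Fin 2 → ℂ, isUnitVec x ∧ isUnitVec y ∧
        r = (star (prodVec x y) ⬝ᵥ bellA.mulVec (prodVec x y)).re} (-(1 / 2)) ∧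
    IsGreatest {r : ℝ | ∃ x y : Fin 2 → ℂ, isUnitVec x ∧ isUnitVec y ∧
        r = (star (prodVec x y) ⬝ᵥ bellA.mulVec (prodVec x y)).re} (1 / 2) := by
  set s : ℝ := (√2)⁻¹
  have hs : s ^ 2 = 1 / 2 := by rw [inv_pow, Real.sq_sqrt zero_le_two, one_div]
  have hu : isUnitVec ![(s : ℂ), (s : ℂ)] := isUnitVec_ofReal (by linarith)
  have hu' : isUnitVec ![(s : ℂ), ((-s : ℝ) : ℂ)] := isUnitVec_ofReal (by rw [neg_sq]; linarith)
  refine ⟨⟨⟨_, _, hu', hu, ?_⟩, ?_⟩, ⟨⟨_, _, hu, hu, ?_⟩, ?_⟩⟩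
  · rw [re_bellA_expectation_ofReal]; linear_combination (2 * s ^ 2 + 1) * hs
  · rintro r ⟨x, y, hx, hy, rfl⟩
    exact (abs_le.mp (abs_re_bellA_expectation_le hx hy)).1
  · rw [re_bellA_expectation_ofReal]; linear_combination (-2 * s ^ 2 - 1) * hs
  · rintro r ⟨x, y, hx, hy, rfl⟩
    exact (abs_le.mp (abs_re_bellA_expectation_le hx hy)).2

end
end
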